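/- arXiv:1805.10941 — 8 statements merged into one kernel-verified Lean document; each statement's English description precedes it below -/
import Mathlib

section
/- Let s, L be natural numbers with 0 < s < 2^L. For every y with 0 ≤ y < s, the number of integers x in [0, 2^L) satisfying (x * s) / 2^L = y and (x * s) mod 2^L ≥ 2^L mod s is exactly 2^L / s (floor division). -/
/-! Write `N = 2 ^ L = s * (N / s) + N % s`. An `x` lands in bucket `y` and is accepted exactly when
`y * N + N % s ≤ x * s < y * N + N`; this half-open interval has length `s * (N / s)`, so it
contains exactly `N / s` multiples of `s`. -/

open Finset

namespace Nat

theorem div_eq_and_le_mod_iff {m N y r : ℕ} (hN : 0 < N) :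
    m / N = y ∧ r ≤ m % N ↔ y * N + r ≤ m ∧ m < y * N + N := by
  have hdiv := Nat.div_add_mod m N
  have hmod := Nat.mod_lt m hN
  constructor
  · rintro ⟨rfl, hr⟩
    constructor <;> linarith [mul_comm N (m / N)]
  · rintro ⟨hlo, hhi⟩
    have hy : m / N = y := Nat.div_eq_of_lt_le (by linarith) (by linarith [succ_mul y N])
    subst hy
    exact ⟨rfl, by linarith [mul_comm N (m / N)]⟩

theorem le_mul_and_mul_lt_iff_mem_Ico {a b s x : ℕ} (hs : 0 < s) :
    a ≤ s * x ∧ s * x < b ↔ x ∈ Ico (a ⌈/⌉ s) (b ⌈/⌉ s) := by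
  rw [mem_Ico, ceilDiv_le_iff_le_mul hs, ← not_le, ← not_le, ceilDiv_le_iff_le_mul hs]

theorem add_mul_ceilDiv {a s k : ℕ} (hs : 0 < s) : (a + s * k) ⌈/⌉ s = a ⌈/⌉ s + k := by
  rw [ceilDiv_eq_add_pred_div, ceilDiv_eq_add_pred_div, ← Nat.add_mul_div_left _ _ hs]
  congr 1
  omega

end Nat

theorem card_filter_div_eq_and_mod_le {N s y : ℕ} (hN : 0 < N) (hy : y < s) :
    #{x ∈ range N | x * s / N = y ∧ N % s ≤ x * s % N} = N / s := by
  have hs : 0 < s := Nat.zero_lt_of_lt hy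
  set a := y * N + N % s
  have hend : y * N + N = a + s * (N / s) := by have := Nat.mod_add_div N s; omega
  have hfiber : {x ∈ range N | x * s / N = y ∧ N % s ≤ x * s % N}
      = Ico (a ⌈/⌉ s) (a ⌈/⌉ s + N / s) := by
    ext x
    rw [mem_filter, mem_range, Nat.div_eq_and_le_mod_iff hN, hend, mul_comm x s,
      ← Nat.add_mul_ceilDiv hs, ← Nat.le_mul_and_mul_lt_iff_mem_Ico hs]
    refine and_iff_right_of_imp fun ⟨_, hlt⟩ => Nat.lt_of_mul_lt_mul_left (a := s) ?_
    calc s * x < a + s * (N / s) := hlt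
      _ = y * N + N := hend.symm
      _ ≤ s * N := by rw [← Nat.succ_mul]; exact Nat.mul_le_mul_right N hy
  rw [hfiber, Nat.card_Ico, Nat.add_sub_cancel_left]

theorem fiber_count_accepted_general (s L y : ℕ) (hy : y < s) :
    ((Finset.range (2 ^ L)).filter
        (fun x => (x * s) / 2 ^ L = y ∧ 2 ^ L % s ≤ (x * s) % 2 ^ L)).card
      = 2 ^ L / s :=
  card_filter_div_eq_and_mod_le (Nat.two_pow_pos L) hy

theorem fiber_count_accepted (s L y : ℕ) (hs : 0 < s) (hsL : s < 2 ^ L) (hy : y < s) :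
    ((Finset.range (2 ^ L)).filter
        (fun x => (x * s) / 2 ^ L = y ∧ 2 ^ L % s ≤ (x * s) % 2 ^ L)).card
      = 2 ^ L / s :=
  fiber_count_accepted_general s L y hy
end

section
/- Let s, L be natural numbers with 0 < s < 2^L. Then the number of integers x in [0, 2^L) with (x*s) mod 2^L < 2^L mod s equals 2^L - s * (2^L / s), i.e., equals 2^L mod s. -/
theorem rejected_count (s L : ℕ) (hs : 0 < s) (hsL : s < 2 ^ L) :
    ((Finset.range (2 ^ L)).filter (fun x => (x * s) % 2 ^ L < 2 ^ L % s)).card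
      = 2 ^ L % s ∧ 2 ^ L % s = 2 ^ L - s * (2 ^ L / s) := by
  set N := 2 ^ L with hN
  have hNpos : 0 < N := Nat.pow_pos (by norm_num)
  set r := N % s with hr
  set d := N / s with hd
  have hmd : r + s * d = N := Nat.mod_add_div N s
  have hrs : r < s := Nat.mod_lt _ hs
  have hds : s * d = N - r := by omega
  -- key pointwise identity
  have key : ∀ x, ((x + d) * s) / N = (x * s) / N + (if (x * s) % N < r then 0 else 1) := by
    intro x
    have h1 : x * s = N * (x * s / N) + (x * s) % N := (Nat.div_add_mod _ _).symm
    have h2 : (x * s) % N < N := Nat.mod_lt _ hNpos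
    have hxds : (x + d) * s = x * s + s * d := by ring
    set q := x * s / N with hq
    set m := (x * s) % N with hm'
    by_cases hm : m < r
    · have e : (x + d) * s = (m + s * d) + N * q := by rw [hxds, h1]; ring
      rw [e, mul_comm N q, Nat.add_mul_div_right _ _ hNpos, Nat.div_eq_of_lt (by omega)]
      simp [hm]
    · have e : (x + d) * s = ((m - r) + N) + N * q := by rw [hxds, h1]; omega
      rw [e, mul_comm N q, Nat.add_mul_div_right _ _ hNpos,
        Nat.add_div_right _ hNpos, Nat.div_eq_of_lt (by omega)]
      simp [hm]; omega
  -- small-range sums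
  have hsum1 : ∑ x ∈ Finset.range d, (x * s) / N = 0 := by
    apply Finset.sum_eq_zero
    intro x hx
    have hx' : x < d := Finset.mem_range.mp hx
    have h3 : x * s < d * s := (Nat.mul_lt_mul_right hs).mpr hx'
    have h4 : d * s ≤ N := by rw [mul_comm]; omega
    exact Nat.div_eq_of_lt (by omega)
  have hsum2 : ∑ x ∈ Finset.range d, ((N + x) * s) / N = s * d := by
    have h5 : ∀ x ∈ Finset.range d, ((N + x) * s) / N = s + (x * s) / N := by
      intro x hx
      have h6 : (N + x) * s = x * s + s * N := by ring
      rw [h6, Nat.add_mul_div_right _ _ hNpos]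
      omega
    rw [Finset.sum_congr rfl h5, Finset.sum_add_distrib, hsum1]
    simp [mul_comm]
  have hshift : ∑ x ∈ Finset.range N, ((d + x) * s) / N
      = ∑ x ∈ Finset.range N, (x * s) / N + s * d := by
    have e1 := Finset.sum_range_add (fun x => (x * s) / N) d N
    have e2 := Finset.sum_range_add (fun x => (x * s) / N) N d
    rw [Nat.add_comm d N] at e1
    simp only [hsum2] at e2
    simp only [hsum1] at e1
    omega
  have hkeysum : ∑ x ∈ Finset.range N, ((x + d) * s) / N
      = ∑ x ∈ Finset.range N, (x * s) / N
        + ∑ x ∈ Finset.range N, (if (x * s) % N < r then 0 else 1) := by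
    rw [Finset.sum_congr rfl (fun x _ => key x), Finset.sum_add_distrib]
  have hshift' : ∑ x ∈ Finset.range N, ((x + d) * s) / N
      = ∑ x ∈ Finset.range N, ((d + x) * s) / N := by
    apply Finset.sum_congr rfl; intro x _; rw [Nat.add_comm]
  have hite : ∑ x ∈ Finset.range N, (if (x * s) % N < r then 0 else 1) = s * d := by
    omega
  have hcard : ((Finset.range N).filter (fun x => (x * s) % N < r)).card
      = ∑ x ∈ Finset.range N, (if (x * s) % N < r then 1 else 0) := by
    rw [Finset.card_filter]
  have hsplit : ∑ x ∈ Finset.range N, (if (x * s) % N < r then 1 else 0)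
      + ∑ x ∈ Finset.range N, (if (x * s) % N < r then 0 else 1) = N := by
    rw [← Finset.sum_add_distrib]
    have h7 : ∀ x ∈ Finset.range N,
        (if (x * s) % N < r then 1 else 0) + (if (x * s) % N < r then 0 else 1) = 1 := by
      intro x _; split <;> rfl
    rw [Finset.sum_congr rfl h7]
    simp
  exact ⟨by omega, by omega⟩
end

section
/- Let s, L be natural numbers with 0 < s < 2^L, and let t = 2^L mod s. The number of integers x in [0, 2^L) with x ≥ t is 2^L - t, and s divides 2^L - t; moreover for each y in [0, s), the number of x in [t, 2^L) with x mod s = y is exactly 2^L / s (floor division). -/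
/-! Since `2 ^ L = 2 ^ L % s + s * (2 ^ L / s)`, the accepted range `[2 ^ L % s, 2 ^ L)` consists of
exactly `2 ^ L / s` full periods of `x ↦ x % s`, and each period hits every residue once. -/

open Finset

theorem Nat.Ico_add_mul_filter_modEq_card {s : ℕ} (hs : 0 < s) (a q v : ℕ) :
    #{x ∈ Ico a (a + s * q) | x ≡ v [MOD s]} = q := by
  have hs' : (s : ℚ) ≠ 0 := by positivity
  have hceil : ⌈((a + s * q : ℕ) - v : ℚ) / s⌉ = ⌈(a - v : ℚ) / s⌉ + q := by
    rw [← Int.ceil_add_natCast]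
    congr 1
    push_cast
    field_simp
    ring
  have hcount := Nat.Ico_filter_modEq_card a (a + s * q) hs v
  rw [hceil, add_sub_cancel_left, max_eq_left (Int.natCast_nonneg q)] at hcount
  exact_mod_cast hcount

theorem openbsd_uniform_general (s L : ℕ) :
    (Finset.Ico (2 ^ L % s) (2 ^ L)).card = 2 ^ L - 2 ^ L % s ∧
    s ∣ (2 ^ L - 2 ^ L % s) ∧
    ∀ y < s, ((Finset.Ico (2 ^ L % s) (2 ^ L)).filter (fun x => x % s = y)).card
      = 2 ^ L / s := by
  refine ⟨Nat.card_Ico _ _, Nat.dvd_sub_mod _, fun y hy => ?_⟩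
  have hmodEq : ∀ x, x % s = y ↔ x ≡ y [MOD s] := fun x => by
    rw [Nat.ModEq, Nat.mod_eq_of_lt hy]
  simp_rw [hmodEq]
  have hcount := Nat.Ico_add_mul_filter_modEq_card (y.zero_le.trans_lt hy) (2 ^ L % s) (2 ^ L / s) y
  rwa [Nat.mod_add_div] at hcount

theorem openbsd_uniform (s L : ℕ) (hs : 0 < s) (hsL : s < 2 ^ L) :
    (Finset.Ico (2 ^ L % s) (2 ^ L)).card = 2 ^ L - 2 ^ L % s ∧
    s ∣ (2 ^ L - 2 ^ L % s) ∧
    ∀ y < s, ((Finset.Ico (2 ^ L % s) (2 ^ L)).filter (fun x => x % s = y)).card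
      = 2 ^ L / s :=
  openbsd_uniform_general s L
end

section
/- Let s, L be natural numbers with 0 < s ≤ 2^L. For x in [0, 2^L), letting r = x mod s, the condition x - r > 2^L - s holds if and only if x ≥ 2^L - (2^L mod s). -/
/-!
`x - x % s = (x / s) * s` and `2 ^ L - 2 ^ L % s = (2 ^ L / s) * s` are the largest multiples of
`s` not exceeding `x` and `2 ^ L`, so both sides of the equivalence say `2 ^ L / s ≤ x / s`.
-/

namespace Nat

theorem sub_lt_sub_mod_iff_div_le {s n x : ℕ} (hs : 0 < s) (hsn : s ≤ n) :
    n - s < x - x % s ↔ n / s ≤ x / s := by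
  rw [← div_mul_self_eq_mod_sub_self, tsub_lt_iff_right hsn, ← Nat.succ_mul,
    ← div_lt_iff_lt_mul hs, Nat.lt_succ_iff]

theorem sub_mod_le_iff_div_le {s n x : ℕ} (hs : 0 < s) :
    n - n % s ≤ x ↔ n / s ≤ x / s := by
  rw [← div_mul_self_eq_mod_sub_self, le_div_iff_mul_le hs]

end Nat

theorem java_rejection_test_general (s L x : ℕ) (hs : 0 < s) (hsL : s ≤ 2 ^ L) :
    x - x % s > 2 ^ L - s ↔ 2 ^ L - 2 ^ L % s ≤ x := by
  rw [gt_iff_lt, Nat.sub_lt_sub_mod_iff_div_le hs hsL, Nat.sub_mod_le_iff_div_le hs]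

theorem java_rejection_test (s L x : ℕ) (hs : 0 < s) (hsL : s ≤ 2 ^ L) (hx : x < 2 ^ L) :
    x - x % s > 2 ^ L - s ↔ 2 ^ L - 2 ^ L % s ≤ x :=
  java_rejection_test_general s L x hs hsL
end

section
/- Let s, L be natural numbers with 0 < s < 2^L. The probability that a uniformly random x in [0, 2^L) enters the slow path of Algorithm 3, i.e. satisfies (x * s) mod 2^L < s, is exactly (number of such x)/2^L, and #{x ∈ [0, 2^L) : (x·s) mod 2^L < s} = s. -/
theorem slow_path_count (s L : ℕ) (hs : 0 < s) (hsL : s < 2 ^ L) :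
    ((Finset.range (2 ^ L)).filter (fun x => (x * s) % 2 ^ L < s)).card = s := by
  set N := 2 ^ L with hN
  have hN0 : 0 < N := Nat.pow_pos (by norm_num)
  -- key: div jump indicator
  have key : ∀ x, ((x + 1) * s) / N - (x * s) / N =
      if ((x + 1) * s) % N < s then 1 else 0 := by
    intro x
    have hadd : (x + 1) * s = x * s + s := by ring
    have hdiv : (x * s + s) / N = x * s / N + s / N +
        if N ≤ x * s % N + s % N then 1 else 0 := Nat.add_div hN0
    have hmod : (x * s + s) % N = (x * s % N + s % N) % N := Nat.add_mod _ _ _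
    have hs1 : s / N = 0 := Nat.div_eq_of_lt hsL
    have hs2 : s % N = s := Nat.mod_eq_of_lt hsL
    have hr1 : x * s % N < N := Nat.mod_lt _ hN0
    rw [hadd, hdiv, hs1, hs2, hmod, hs2]
    by_cases h : N ≤ x * s % N + s
    · have : (x * s % N + s) % N = x * s % N + s - N := by
        rw [Nat.mod_eq_sub_mod h, Nat.mod_eq_of_lt (by omega)]
      rw [this]
      simp only [if_pos h]
      rw [if_pos (by omega)]
      omega
    · have : (x * s % N + s) % N = x * s % N + s := Nat.mod_eq_of_lt (by omega)
      rw [this]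
      simp only [if_neg h]
      rw [if_neg (by omega)]
      omega
  have hcard : ((Finset.range N).filter (fun x => (x * s) % N < s)).card =
      ∑ x ∈ Finset.range N, if (x * s) % N < s then 1 else 0 := by
    rw [Finset.card_filter]
  rw [hcard]
  obtain ⟨M, hM⟩ : ∃ M, N = M + 1 := ⟨N - 1, by omega⟩
  rw [show Finset.range N = Finset.range (M + 1) from by rw [hM], Finset.sum_range_succ']
  have h0 : (0 * s) % N < s := by simpa using hs
  rw [if_pos h0]
  have hmono : Monotone (fun x => (x * s) / N) := by
    intro a b hab
    exact Nat.div_le_div_right (Nat.mul_le_mul_right s hab)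
  calc (∑ x ∈ Finset.range M, if ((x + 1) * s) % N < s then 1 else 0) + 1
      = (∑ x ∈ Finset.range M, (((x + 1) * s) / N - (x * s) / N)) + 1 := by
        congr 1
        exact Finset.sum_congr rfl fun x _ => (key x).symm
    _ = (M * s / N - 0 * s / N) + 1 := by
        rw [Finset.sum_range_tsub hmono]
    _ = s := by
        have hval : M * s = (s - 1) * N + (N - s) := by
          zify [hs, hN0, le_of_lt hsL]
          have : (M : ℤ) = N - 1 := by omega
          rw [this]; ring
        have hdiv2 : M * s / N = s - 1 := by
          rw [hval, Nat.add_comm, Nat.add_mul_div_right _ _ hN0, Nat.div_eq_of_lt (by omega)]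
          omega
        simp [hdiv2]
        omega
end

section
/- For natural numbers s, L with 0 < s ≤ 2^L, the map x ↦ (x·s) / 2^L from [0, 2^L) to [0, s) is monotone non-decreasing, and for each y ∈ [0, s) its fiber is an interval of consecutive integers of length either ⌊2^L/s⌋ or ⌈2^L/s⌉. -/
private lemma ceil_div_le_iff {m s x : ℕ} (hs : 0 < s) :
    (m + s - 1) / s ≤ x ↔ m ≤ x * s := by
  rw [Nat.div_le_iff_le_mul_add_pred hs, mul_comm x s]
  rcases Nat.eq_zero_or_pos m with h | h
  · simp [h]
  · omega

private lemma lt_ceil_div_iff {m s x : ℕ} (hs : 0 < s) :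
    x < (m + s - 1) / s ↔ x * s < m := by
  rw [← not_le, ← not_le, not_iff_not, ceil_div_le_iff hs]

theorem mul_shift_monotone_fibers (s L : ℕ) (hs : 0 < s) (hsL : s ≤ 2 ^ L) :
    (∀ x₁ x₂ : ℕ, x₁ ≤ x₂ → (x₁ * s) / 2 ^ L ≤ (x₂ * s) / 2 ^ L) ∧
    ∀ y < s, ∃ a b : ℕ,
      (Finset.range (2 ^ L)).filter (fun x => (x * s) / 2 ^ L = y) = Finset.Ico a b ∧
      (b - a = 2 ^ L / s ∨ b - a = (2 ^ L + s - 1) / s) := by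
  have hN0 : 0 < 2 ^ L := Nat.pow_pos (by norm_num)
  constructor
  · intro x₁ x₂ h
    exact Nat.div_le_div_right (Nat.mul_le_mul_right s h)
  intro y hy
  refine ⟨(y * 2 ^ L + s - 1) / s, ((y + 1) * 2 ^ L + s - 1) / s, ?_, ?_⟩
  · have hbN : ((y + 1) * 2 ^ L + s - 1) / s ≤ 2 ^ L := by
      rw [ceil_div_le_iff hs, mul_comm (2 ^ L) s]
      exact Nat.mul_le_mul_right (2 ^ L) hy
    ext x
    simp only [Finset.mem_filter, Finset.mem_range, Finset.mem_Ico]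
    have A : (y * 2 ^ L + s - 1) / s ≤ x ↔ y * 2 ^ L ≤ x * s := ceil_div_le_iff hs
    have B : x < ((y + 1) * 2 ^ L + s - 1) / s ↔ x * s < (y + 1) * 2 ^ L :=
      lt_ceil_div_iff hs
    have C : x * s / 2 ^ L = y ↔ y * 2 ^ L ≤ x * s ∧ x * s < (y + 1) * 2 ^ L := by
      constructor
      · intro h
        refine ⟨?_, ?_⟩
        · rw [← h]; exact (Nat.le_div_iff_mul_le hN0).mp le_rfl
        · exact (Nat.div_lt_iff_lt_mul hN0).mp (by omega)
      · rintro ⟨h1, h2⟩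
        have hle : y ≤ x * s / 2 ^ L := (Nat.le_div_iff_mul_le hN0).mpr h1
        have hlt : x * s / 2 ^ L < y + 1 := (Nat.div_lt_iff_lt_mul hN0).mpr h2
        omega
    constructor
    · rintro ⟨_, h⟩
      exact ⟨A.mpr (C.mp h).1, B.mpr (C.mp h).2⟩
    · rintro ⟨h1, h2⟩
      exact ⟨lt_of_lt_of_le h2 hbN, C.mpr ⟨A.mp h1, B.mp h2⟩⟩
  · have f1 : 2 ^ L / s ≤ (2 ^ L + s - 1) / s := Nat.div_le_div_right (by omega)
    have f2 : (2 ^ L + s - 1) / s ≤ 2 ^ L / s + 1 := by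
      rw [Nat.div_le_iff_le_mul_add_pred hs]
      have h1 := Nat.div_add_mod (2 ^ L) s
      have h2 : 2 ^ L % s < s := Nat.mod_lt _ hs
      have h3 : s * (2 ^ L / s + 1) = s * (2 ^ L / s) + s := by ring
      omega
    have f3 : (y * 2 ^ L + s - 1) / s + 2 ^ L / s ≤ ((y + 1) * 2 ^ L + s - 1) / s := by
      apply (Nat.le_div_iff_mul_le hs).mpr
      have e1 : (y * 2 ^ L + s - 1) / s * s ≤ y * 2 ^ L + s - 1 := Nat.div_mul_le_self _ _
      have e2 : 2 ^ L / s * s ≤ 2 ^ L := Nat.div_mul_le_self _ _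
      have e3 : ((y * 2 ^ L + s - 1) / s + 2 ^ L / s) * s
          = (y * 2 ^ L + s - 1) / s * s + 2 ^ L / s * s := by ring
      have e4 : (y + 1) * 2 ^ L = y * 2 ^ L + 2 ^ L := by ring
      omega
    have f4 : ((y + 1) * 2 ^ L + s - 1) / s
        ≤ (y * 2 ^ L + s - 1) / s + (2 ^ L + s - 1) / s := by
      rw [Nat.div_le_iff_le_mul_add_pred hs]
      have e1 : y * 2 ^ L ≤ (y * 2 ^ L + s - 1) / s * s := (ceil_div_le_iff hs).mp le_rfl
      have e2 : 2 ^ L ≤ (2 ^ L + s - 1) / s * s := (ceil_div_le_iff hs).mp le_rfl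
      have e3 : s * ((y * 2 ^ L + s - 1) / s + (2 ^ L + s - 1) / s)
          = (y * 2 ^ L + s - 1) / s * s + (2 ^ L + s - 1) / s * s := by ring
      have e4 : (y + 1) * 2 ^ L = y * 2 ^ L + 2 ^ L := by ring
      omega
    revert f1 f2 f3 f4
    generalize ((y + 1) * 2 ^ L + s - 1) / s = v
    generalize (y * 2 ^ L + s - 1) / s = u
    generalize (2 ^ L + s - 1) / s = c
    generalize (2 ^ L : ℕ) / s = p
    intro f1 f2 f3 f4
    omega
end

section
/- For natural numbers s, L with 0 < s ≤ 2^L and any y with y < s, the fiber {x ∈ [0, 2^L) : (x·s) / 2^L = y} equals the interval [⌈y·2^L / s⌉, ⌈(y+1)·2^L / s⌉) where ⌈a/b⌉ denotes ceiling division, and this interval is nonempty. -/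
/-!
Since `x * s / 2 ^ L = y` means `y * 2 ^ L ≤ x * s < (y + 1) * 2 ^ L`, and ceiling division is the
lower adjoint of multiplication by `s`, the fiber is the interval between the two ceilings; the
constraint `x < 2 ^ L` is automatic because `(y + 1) * 2 ^ L ≤ s * 2 ^ L`. The interval is nonempty
because the two numerators differ by `2 ^ L ≥ s`.
-/

open Finset

section CeilDiv

variable {α : Type*} [Semiring α] [LinearOrder α] [CeilDiv α α] {a b c : α}

lemma lt_ceilDiv_iff_mul_lt (ha : 0 < a) : c < b ⌈/⌉ a ↔ a * c < b :=
  (gc_mul_ceilDiv ha).lt_iff_lt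

lemma mem_Ico_ceilDiv_iff [LocallyFiniteOrder α] {x : α} (ha : 0 < a) :
    x ∈ Ico (b ⌈/⌉ a) (c ⌈/⌉ a) ↔ b ≤ a * x ∧ a * x < c := by
  rw [mem_Ico, ceilDiv_le_iff_le_mul ha, lt_ceilDiv_iff_mul_lt ha]

end CeilDiv

namespace Nat

variable {a b m n s y : ℕ}

lemma ceilDiv_lt_ceilDiv (hs : 0 < s) (hab : a + s ≤ b) : a ⌈/⌉ s < b ⌈/⌉ s := by
  have hmul : s * (a ⌈/⌉ s) ≤ a + s - 1 := by
    rw [ceilDiv_eq_add_pred_div, mul_comm]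
    exact div_mul_le_self _ _
  rw [lt_ceilDiv_iff_mul_lt hs]
  omega

lemma div_eq_iff_le_and_lt (hn : 0 < n) : m / n = y ↔ y * n ≤ m ∧ m < (y + 1) * n := by
  rw [Nat.div_eq_iff hn, add_one_mul]
  omega

theorem filter_range_mul_div_eq (hn : 0 < n) (hy : y < s) :
    (range n).filter (fun x => x * s / n = y) = Ico (y * n ⌈/⌉ s) ((y + 1) * n ⌈/⌉ s) := by
  ext x
  rw [mem_filter, mem_range, div_eq_iff_le_and_lt hn, mem_Ico_ceilDiv_iff (zero_lt_of_lt hy),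
    mul_comm s x]
  refine and_iff_right_of_imp fun ⟨_, hx⟩ => Nat.lt_of_mul_lt_mul_right (a := s) ?_
  calc x * s < (y + 1) * n := hx
    _ ≤ n * s := by rw [mul_comm]; exact Nat.mul_le_mul_left n hy

end Nat

theorem mul_shift_fiber_explicit_general (s L y : ℕ) (hsL : s ≤ 2 ^ L) (hy : y < s) :
    (Finset.range (2 ^ L)).filter (fun x => (x * s) / 2 ^ L = y)
      = Finset.Ico ((y * 2 ^ L + s - 1) / s) (((y + 1) * 2 ^ L + s - 1) / s) ∧
    (y * 2 ^ L + s - 1) / s < ((y + 1) * 2 ^ L + s - 1) / s := by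
  have hs : 0 < s := Nat.zero_lt_of_lt hy
  simp only [← Nat.ceilDiv_eq_add_pred_div]
  refine ⟨Nat.filter_range_mul_div_eq (Nat.two_pow_pos L) hy, Nat.ceilDiv_lt_ceilDiv hs ?_⟩
  rw [add_one_mul]
  omega

theorem mul_shift_fiber_explicit (s L y : ℕ) (hs : 0 < s) (hsL : s ≤ 2 ^ L) (hy : y < s) :
    (Finset.range (2 ^ L)).filter (fun x => (x * s) / 2 ^ L = y)
      = Finset.Ico ((y * 2 ^ L + s - 1) / s) (((y + 1) * 2 ^ L + s - 1) / s) ∧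
    (y * 2 ^ L + s - 1) / s < ((y + 1) * 2 ^ L + s - 1) / s :=
  mul_shift_fiber_explicit_general s L y hsL hy
end

section
/- Let s, L be natural numbers with 0 < s < 2^L. For each i ∈ [0, s), the number of x ∈ [0, 2^L) with i·2^L ≤ x·s < i·2^L + (2^L mod s) is at most 1, and summing over i ∈ [0, s), the total number of rejected x in Algorithm 3 is exactly 2^L mod s. -/
private lemma odd_count (s n : ℕ) (hs : 0 < s) (hsn : s < n) (hco : Nat.Coprime s n) :
    ((Finset.range n).filter (fun x => (x * s) % n < n % s)).card = n % s := by
  have hn1 : 1 < n := lt_of_le_of_lt hs hsn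
  obtain ⟨a, -, ha⟩ := Nat.exists_mul_mod_eq_one_of_coprime hco hn1
  have key : ∀ t : ℕ, t * a % n * s % n = t % n := by
    intro t
    rw [Nat.mod_mul_mod, mul_assoc, mul_comm a s, Nat.mul_mod, ha, mul_one, Nat.mod_mod]
  have key2 : ∀ x : ℕ, x * s % n * a % n = x % n := by
    intro x
    rw [Nat.mod_mul_mod, mul_assoc, Nat.mul_mod, ha, mul_one, Nat.mod_mod]
  have hr : n % s < n := lt_of_lt_of_le (Nat.mod_lt _ hs) (le_of_lt hsn)
  have main : ((Finset.range n).filter (fun x => (x * s) % n < n % s)).card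
      = (Finset.range (n % s)).card := by
    apply Finset.card_nbij' (fun x => (x * s) % n) (fun t => (t * a) % n)
    · intro x hx
      simp only [Finset.mem_coe, Finset.mem_filter] at hx
      simpa using hx.2
    · intro t ht
      simp only [Finset.mem_coe, Finset.mem_range] at ht
      simp only [Finset.mem_coe, Finset.mem_filter, Finset.mem_range]
      refine ⟨Nat.mod_lt _ (by omega), ?_⟩
      rw [key t, Nat.mod_eq_of_lt (by omega)]
      exact ht
    · intro x hx
      simp only [Finset.mem_coe, Finset.mem_filter, Finset.mem_range] at hx
      simp only [key2 x, Nat.mod_eq_of_lt hx.1]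
    · intro t ht
      simp only [Finset.mem_coe, Finset.mem_range] at ht
      simp only [key t, Nat.mod_eq_of_lt (show t < n by omega)]
  rw [main, Finset.card_range]

private lemma double_count (n : ℕ) (p : ℕ → Prop) [DecidablePred p]
    (hp : ∀ x, p (x + n) ↔ p x) :
    ((Finset.range (2 * n)).filter p).card = 2 * ((Finset.range n).filter p).card := by
  have h2n : 2 * n = n + n := by ring
  rw [h2n, Finset.range_add, Finset.filter_union, Finset.card_union_of_disjoint, two_mul]
  · congr 1
    rw [Finset.filter_map, Finset.card_map]
    congr 1
    apply Finset.filter_congr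
    intro x hx
    simp only [Function.comp, addLeftEmbedding_apply, add_comm n x, hp]
  · exact Finset.disjoint_filter_filter (Finset.disjoint_range_addLeftEmbedding n _)

private lemma aux_count : ∀ L s : ℕ, 0 < s → s < 2 ^ L →
    ((Finset.range (2 ^ L)).filter (fun x => (x * s) % 2 ^ L < 2 ^ L % s)).card = 2 ^ L % s := by
  intro L
  induction L with
  | zero => intro s hs hsL; omega
  | succ L ih =>
    intro s hs hsL
    rcases Nat.even_or_odd s with ⟨s', rfl⟩ | hodd
    · have hs' : 0 < s' := by omega
      have h2 : 2 ^ (L + 1) = 2 * 2 ^ L := by ring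
      have hsL' : s' < 2 ^ L := by omega
      have hss : s' + s' = 2 * s' := by ring
      rw [hss, h2]
      rw [Finset.filter_congr (q := fun x => (x * s') % 2 ^ L < 2 ^ L % s')
        (fun x _ => by
          rw [show x * (2 * s') = 2 * (x * s') by ring, Nat.mul_mod_mul_left,
            Nat.mul_mod_mul_left]
          omega)]
      rw [Nat.mul_mod_mul_left]
      rw [double_count (2 ^ L) (fun x => (x * s') % 2 ^ L < 2 ^ L % s')
        (fun x => by simp [Nat.add_mul, Nat.add_mul_mod_self_left])]
      rw [ih s' hs' hsL']
    · apply odd_count _ _ hs hsL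
      exact Nat.Coprime.pow_right _ (Nat.coprime_two_right.mpr hodd)

theorem blockwise_rejection_count (s L : ℕ) (hs : 0 < s) (hsL : s < 2 ^ L) :
    (∀ i < s, ((Finset.range (2 ^ L)).filter
        (fun x => i * 2 ^ L ≤ x * s ∧ x * s < i * 2 ^ L + 2 ^ L % s)).card ≤ 1) ∧
    ((Finset.range (2 ^ L)).filter (fun x => (x * s) % 2 ^ L < 2 ^ L % s)).card
      = 2 ^ L % s := by
  constructor
  · intro i hi
    apply Finset.card_le_one.mpr
    intro a ha b hb
    simp only [Finset.mem_filter, Finset.mem_range] at ha hb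
    have hrs : 2 ^ L % s < s := Nat.mod_lt _ hs
    have h1 : a < b + 1 :=
      Nat.lt_of_mul_lt_mul_right (show a * s < (b + 1) * s by rw [Nat.add_mul]; omega)
    have h2 : b < a + 1 :=
      Nat.lt_of_mul_lt_mul_right (show b * s < (a + 1) * s by rw [Nat.add_mul]; omega)
    omega
  · exact aux_count L s hs hsL
end
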